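/- arXiv:1403.4943 — 2 statements merged into one kernel-verified Lean document; each statement's English description precedes it below -/
import Mathlib

section
/- Let η = diag(1,−1,…,−1) on ℝ^{1+n} and let v, w be future-directed causal vectors with η(v,w) > 0. Then the symmetric matrix vwᵀ + wvᵀ − η(v,w)·η is positive semidefinite. -/
/-- The Minkowski inner product of signature `(1,n)` on `ℝ^{1+n}`. -/
noncomputable def mink {n : ℕ} (x y : Fin (n + 1) → ℝ) : ℝ :=
  x 0 * y 0 - ∑ i : Fin n, x i.succ * y i.succ

/-- The matrix `η = diag(1, -1, …, -1)`. -/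
noncomputable def minkMatrix (n : ℕ) : Matrix (Fin (n + 1)) (Fin (n + 1)) ℝ :=
  Matrix.diagonal (fun i => if i = 0 then 1 else -1)

/-!
Split vectors of `ℝ^{1+n}` into time and space parts, `v = (A, a)`, `w = (B, b)`, `x = (x₀, ξ)`.
Then `xᵀ T x = 2 (x ⬝ v) (x ⬝ w) - η(v, w) η(x, x)` is a quadratic polynomial in `x₀` with
leading coefficient `AB + ⟪a, b⟫ ≥ 0`, and its discriminant is nonpositive because the Gram
determinant of `a, b, ξ` is nonnegative and `‖a‖ ≤ A`, `‖b‖ ≤ B`. When `AB + ⟪a, b⟫ = 0` the form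
does not depend on `x₀` and Cauchy–Schwarz suffices.
-/

open Matrix RealInnerProductSpace

section InnerProductSpace

variable {E : Type*} [NormedAddCommGroup E] [InnerProductSpace ℝ E]

theorem gram_det_three_nonneg (a b x : E) :
    ‖a‖ ^ 2 * ⟪x, b⟫ ^ 2 + ‖b‖ ^ 2 * ⟪x, a⟫ ^ 2 - 2 * ⟪a, b⟫ * ⟪x, a⟫ * ⟪x, b⟫
      + ⟪a, b⟫ ^ 2 * ‖x‖ ^ 2 ≤ ‖a‖ ^ 2 * ‖b‖ ^ 2 * ‖x‖ ^ 2 := by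
  have h := (posSemidef_gram ℝ ![a, b, x]).det_nonneg
  rw [det_fin_three] at h
  simp only [gram_apply, Fin.isValue, cons_val_zero, cons_val_one, cons_val_two, tail_cons,
    head_cons, real_inner_self_eq_norm_sq] at h
  rw [real_inner_comm a b, real_inner_comm x a, real_inner_comm x b] at h
  linear_combination h

theorem real_inner_sq_le_norm_sq_mul_norm_sq (x y : E) : ⟪x, y⟫ ^ 2 ≤ ‖x‖ ^ 2 * ‖y‖ ^ 2 := by
  simpa only [sq, real_inner_self_eq_norm_sq] using real_inner_mul_inner_self_le x y

theorem stressEnergy_nonneg {A B : ℝ} {a b : E} (ha : ‖a‖ ≤ A) (hb : ‖b‖ ≤ B) (x₀ : ℝ) (ξ : E) :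
    0 ≤ 2 * (x₀ * A + ⟪ξ, a⟫) * (x₀ * B + ⟪ξ, b⟫) - (A * B - ⟪a, b⟫) * (x₀ ^ 2 - ‖ξ‖ ^ 2) := by
  set s := ⟪ξ, a⟫
  set t := ⟪ξ, b⟫
  set c := ⟪a, b⟫
  set p := ‖ξ‖ ^ 2
  have hA : ‖a‖ ^ 2 ≤ A ^ 2 := pow_le_pow_left₀ (norm_nonneg a) ha 2
  have hB : ‖b‖ ^ 2 ≤ B ^ 2 := pow_le_pow_left₀ (norm_nonneg b) hb 2
  have hs : s ^ 2 ≤ p * ‖a‖ ^ 2 := real_inner_sq_le_norm_sq_mul_norm_sq ξ a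
  have ht : t ^ 2 ≤ p * ‖b‖ ^ 2 := real_inner_sq_le_norm_sq_mul_norm_sq ξ b
  have hA0 : 0 ≤ A := (norm_nonneg a).trans ha
  have hc : 0 ≤ A * B + c := by
    linarith [neg_abs_le c, abs_real_inner_le_norm a b, mul_le_mul ha hb (norm_nonneg b) hA0]
  have hp : 0 ≤ p := sq_nonneg _
  have hdisc : (A * t + B * s) ^ 2 ≤ (A * B + c) * (2 * s * t + (A * B - c) * p) := by
    linear_combination gram_det_three_nonneg a b ξ + mul_nonneg (sub_nonneg.2 hA) (sub_nonneg.2 ht)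
      + mul_nonneg (sub_nonneg.2 hB) (sub_nonneg.2 hs)
      + mul_nonneg (mul_nonneg (sub_nonneg.2 hA) (sub_nonneg.2 hB)) hp
  rcases hc.eq_or_lt with hAB | hAB
  · have hlin : A * t + B * s = 0 := by
      rw [← hAB, zero_mul] at hdisc
      exact pow_eq_zero_iff two_ne_zero |>.1 (le_antisymm hdisc (sq_nonneg _))
    have hst : |s * t| ≤ A * B * p := by
      rw [abs_mul]
      calc |s| * |t| ≤ (‖ξ‖ * ‖a‖) * (‖ξ‖ * ‖b‖) :=
            mul_le_mul (abs_real_inner_le_norm ξ a) (abs_real_inner_le_norm ξ b) (abs_nonneg _)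
              (by positivity)
        _ ≤ (‖ξ‖ * A) * (‖ξ‖ * B) := by gcongr
        _ = A * B * p := by ring
    linear_combination 2 * neg_abs_le (s * t) + 2 * hst - 2 * x₀ * hlin + (x₀ ^ 2 - p) * hAB
  · refine nonneg_of_mul_nonneg_right ?_ hAB
    linear_combination sq_nonneg ((A * B + c) * x₀ + A * t + B * s) + hdisc

end InnerProductSpace

section Minkowski

variable {n : ℕ}

noncomputable def spatialPart (x : Fin (n + 1) → ℝ) : EuclideanSpace ℝ (Fin n) :=
  WithLp.toLp 2 (Fin.tail x)

theorem inner_spatialPart (x y : Fin (n + 1) → ℝ) :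
    ⟪spatialPart x, spatialPart y⟫ = ∑ i : Fin n, x i.succ * y i.succ := by
  simp [spatialPart, PiLp.inner_apply, Fin.tail, mul_comm]

theorem mink_eq_sub_inner (x y : Fin (n + 1) → ℝ) :
    mink x y = x 0 * y 0 - ⟪spatialPart x, spatialPart y⟫ := by
  rw [inner_spatialPart, mink]

theorem dotProduct_eq_add_inner (x y : Fin (n + 1) → ℝ) :
    x ⬝ᵥ y = x 0 * y 0 + ⟪spatialPart x, spatialPart y⟫ := by
  rw [inner_spatialPart, dotProduct, Fin.sum_univ_succ]

theorem norm_spatialPart_le {v : Fin (n + 1) → ℝ} (hv : 0 ≤ mink v v) (hv0 : 0 ≤ v 0) :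
    ‖spatialPart v‖ ≤ v 0 := by
  rw [mink_eq_sub_inner, real_inner_self_eq_norm_sq] at hv
  exact (sq_le_sq₀ (norm_nonneg _) hv0).1 (by linarith)

theorem dotProduct_minkMatrix_mulVec (x y : Fin (n + 1) → ℝ) :
    x ⬝ᵥ (minkMatrix n *ᵥ y) = mink x y := by
  simp [minkMatrix, mulVec_diagonal, dotProduct, Fin.sum_univ_succ, mink, sub_eq_add_neg]

noncomputable def stressEnergy (v w : Fin (n + 1) → ℝ) : Matrix (Fin (n + 1)) (Fin (n + 1)) ℝ :=
  vecMulVec v w + vecMulVec w v - mink v w • minkMatrix n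

theorem isHermitian_stressEnergy (v w : Fin (n + 1) → ℝ) : (stressEnergy v w).IsHermitian := by
  refine IsHermitian.sub ?_ ((isHermitian_diagonal _).smul (IsSelfAdjoint.all _))
  simp [IsHermitian, add_comm]

theorem dotProduct_stressEnergy_mulVec (v w x : Fin (n + 1) → ℝ) :
    x ⬝ᵥ (stressEnergy v w *ᵥ x) = 2 * (x ⬝ᵥ v) * (x ⬝ᵥ w) - mink v w * mink x x := by
  simp only [stressEnergy, sub_mulVec, add_mulVec, smul_mulVec, vecMulVec_mulVec, dotProduct_sub,
    dotProduct_add, dotProduct_smul, dotProduct_minkMatrix_mulVec, op_smul_eq_mul, smul_eq_mul,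
    dotProduct_comm _ x]
  ring

theorem posSemidef_stressEnergy {v w : Fin (n + 1) → ℝ} (hv : 0 ≤ mink v v) (hw : 0 ≤ mink w w)
    (hv0 : 0 ≤ v 0) (hw0 : 0 ≤ w 0) : (stressEnergy v w).PosSemidef := by
  refine PosSemidef.of_dotProduct_mulVec_nonneg (isHermitian_stressEnergy v w) fun x => ?_
  rw [star_trivial, dotProduct_stressEnergy_mulVec]
  simp only [dotProduct_eq_add_inner, mink_eq_sub_inner, real_inner_self_eq_norm_sq, ← sq]
  exact stressEnergy_nonneg (norm_spatialPart_le hv hv0) (norm_spatialPart_le hw hw0) (x 0)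
    (spatialPart x)

end Minkowski

theorem stmt_7_general {n : ℕ} (v w : Fin (n + 1) → ℝ)
    (hv : 0 ≤ mink v v) (hw : 0 ≤ mink w w)
    (hv0 : 0 < v 0) (hw0 : 0 < w 0) :
    (Matrix.vecMulVec v w + Matrix.vecMulVec w v - mink v w • minkMatrix n).PosSemidef :=
  posSemidef_stressEnergy hv hw hv0.le hw0.le

theorem stmt_7 {n : ℕ} (v w : Fin (n + 1) → ℝ)
    (hv : 0 ≤ mink v v) (hw : 0 ≤ mink w w)
    (hv0 : 0 < v 0) (hw0 : 0 < w 0) (hvw : 0 < mink v w) :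
    (Matrix.vecMulVec v w + Matrix.vecMulVec w v - mink v w • minkMatrix n).PosSemidef :=
  stmt_7_general v w hv hw hv0 hw0
end

section
/- Let T₁,…,T_p be positive reals, w₁,…,w_p positive reals, and let a finite family of pairs (N_β, t^β) with N_β positive integers and t^β ∈ ℝ^p satisfy: (i) Σᵢ tᵢ^β wᵢ < 0 for every β, and (ii) Σ_β N_β tᵢ^β ≥ −Tᵢ for every i. If moreover for some β each product N_β|tᵢ^β| is ≥ 1 whenever tᵢ^β ≠ 0 and all tᵢ^β < 0, then N_β|tᵢ^β| ≤ Tᵢ for every i, and in particular Σ_β Σᵢ N_β|tᵢ^β| wᵢ ≤ Σᵢ Tᵢ wᵢ. -/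
theorem stmt_19 {p B : ℕ} (T w : Fin p → ℝ)
    (hT : ∀ i, 0 < T i) (hw : ∀ i, 0 < w i)
    (N : Fin B → ℕ) (hN : ∀ β, 1 ≤ N β)
    (t : Fin B → Fin p → ℝ)
    (hsusy : ∀ β, ∑ i, t β i * w i < 0)
    (htad : ∀ i, -T i ≤ ∑ β, (N β : ℝ) * t β i)
    (hint : ∀ β i, t β i ≠ 0 → 1 ≤ (N β : ℝ) * |t β i|)
    (hspecial : ∀ β i, t β i < 0) :
    (∀ β i, (N β : ℝ) * |t β i| ≤ T i) ∧
      ∑ β, ∑ i, (N β : ℝ) * |t β i| * w i ≤ ∑ i, T i * w i := by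
  have habs : ∀ β i, |t β i| = -t β i := fun β i => abs_of_neg (hspecial β i)
  have hsum : ∀ i, ∑ β, (N β : ℝ) * |t β i| ≤ T i := by
    intro i
    have : ∑ β, (N β : ℝ) * |t β i| = -∑ β, (N β : ℝ) * t β i := by
      rw [← Finset.sum_neg_distrib]
      exact Finset.sum_congr rfl fun β _ => by rw [habs]; ring
    rw [this]
    linarith [htad i]
  have hnn : ∀ β i, 0 ≤ (N β : ℝ) * |t β i| := fun β i =>
    mul_nonneg (Nat.cast_nonneg _) (abs_nonneg _)
  have h1 : ∀ β i, (N β : ℝ) * |t β i| ≤ T i := by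
    intro β i
    calc (N β : ℝ) * |t β i| ≤ ∑ β', (N β' : ℝ) * |t β' i| :=
          Finset.single_le_sum (fun b _ => hnn b i) (Finset.mem_univ β)
      _ ≤ T i := hsum i
  refine ⟨h1, ?_⟩
  rw [Finset.sum_comm]
  apply Finset.sum_le_sum
  intro i _
  rw [← Finset.sum_mul]
  exact mul_le_mul_of_nonneg_right (hsum i) (hw i).le
end
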